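/- arXiv:2506.13048 — 7 statements merged into one kernel-verified Lean document; each statement's English description precedes it below -/
import Mathlib

section
/- For any finite hypothesis class H of functions from a finite domain X to {0,1}, the star number of H is at most the eluder dimension of H. -/
/-- A star set for hypothesis class `H`: labeled points `(x i, y i)` realizable by some
`h₀ ∈ H`, such that each single-label flip is also realizable within `H`. -/
def IsStarSet {X : Type*} (H : Set (X → Bool)) {ℓ : ℕ}
    (x : Fin ℓ → X) (y : Fin ℓ → Bool) : Prop :=
  (∃ h0 ∈ H, ∀ i, h0 (x i) = y i) ∧
    ∀ i, ∃ hi ∈ H, hi (x i) = !(y i) ∧ ∀ j, j ≠ i → hi (x j) = y j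

/-- An eluder sequence: for every index `i`, the version space of the preceding
labeled points contains two hypotheses disagreeing at `x i`. -/
def IsEluderSeq {X : Type*} (H : Set (X → Bool)) {ℓ : ℕ}
    (x : Fin ℓ → X) (y : Fin ℓ → Bool) : Prop :=
  ∀ i : Fin ℓ, ∃ h ∈ H, ∃ h' ∈ H,
    (∀ j : Fin ℓ, j < i → h (x j) = y j ∧ h' (x j) = y j) ∧ h (x i) ≠ h' (x i)

/-- The star number of a finite hypothesis class over a finite domain is at most its
eluder dimension: every star set of size `ℓ` yields an eluder sequence of length `ℓ`. -/
theorem star_number_le_eluder_dimension {X : Type*} [Fintype X]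
    (H : Set (X → Bool)) (hH : H.Finite)
    (ℓ : ℕ) (x : Fin ℓ → X) (y : Fin ℓ → Bool) (hstar : IsStarSet H x y) :
    ∃ (x' : Fin ℓ → X) (y' : Fin ℓ → Bool), IsEluderSeq H x' y' := by
  obtain ⟨⟨h0, h0H, h0y⟩, hflip⟩ := hstar
  refine ⟨x, y, fun i => ?_⟩
  obtain ⟨hi, hiH, hix, hiy⟩ := hflip i
  refine ⟨h0, h0H, hi, hiH, fun j hj => ⟨h0y j, hiy j (Fin.ne_of_lt hj)⟩, ?_⟩
  rw [h0y i, hix]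
  simp
end

section
/- For any hypothesis class H, the hollow star number of H is at most the star number of H plus 1. Equivalently, s∘(H) − 1 ≤ s(H). -/
/-- A hollow star set for `H`: an unrealizable set of labeled points such that
flipping any single label yields a realizable set. -/
def IsHollowStarSet {X : Type*} (H : Set (X → Bool)) {ℓ : ℕ}
    (x : Fin ℓ → X) (y : Fin ℓ → Bool) : Prop :=
  (¬ ∃ h ∈ H, ∀ i, h (x i) = y i) ∧
    ∀ i, ∃ hi ∈ H, hi (x i) = !(y i) ∧ ∀ j, j ≠ i → hi (x j) = y j

/-- The hollow star number is at most the star number plus one (`s∘(H) - 1 ≤ s(H)`):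
any hollow star set of size `ℓ + 1` yields a star set of size `ℓ`. -/
theorem hollow_star_le_star_add_one {X : Type*} (H : Set (X → Bool)) (ℓ : ℕ)
    (x : Fin (ℓ + 1) → X) (y : Fin (ℓ + 1) → Bool) (h : IsHollowStarSet H x y) :
    ∃ (x' : Fin ℓ → X) (y' : Fin ℓ → Bool), IsStarSet H x' y' := by
  obtain ⟨-, hflip⟩ := h
  obtain ⟨g, hgH, hglast, hgrest⟩ := hflip (Fin.last ℓ)
  refine ⟨x ∘ Fin.castSucc, y ∘ Fin.castSucc, ⟨g, hgH, fun i => hgrest _ (Fin.castSucc_lt_last i).ne⟩, fun i => ?_⟩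
  obtain ⟨hi, hiH, hix, hirest⟩ := hflip (Fin.castSucc i)
  exact ⟨hi, hiH, hix, fun j hj => hirest _ (fun hc => hj (Fin.castSucc_injective ℓ hc))⟩
end

section
/- Let H be a hypothesis class with hollow star number s∘. Then every finite unrealizable dataset S contains an unrealizable subset S' of size at most s∘. -/
/-- A finite dataset is realizable if some hypothesis in `H` matches all its labels. -/
def Realizable {X : Type*} (H : Set (X → Bool)) (S : Finset (X × Bool)) : Prop :=
  ∃ h ∈ H, ∀ p ∈ S, h p.1 = p.2

/-- If the hollow star number of `H` is at most `s`, then every finite unrealizable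
dataset contains an unrealizable subset of size at most `s`. -/
theorem unrealizable_has_small_unrealizable_subset {X : Type*} (H : Set (X → Bool))
    (s : ℕ)
    (hs : ∀ (ℓ : ℕ) (x : Fin ℓ → X) (y : Fin ℓ → Bool), IsHollowStarSet H x y → ℓ ≤ s)
    (S : Finset (X × Bool)) (hS : ¬ Realizable H S) :
    ∃ S' ⊆ S, ¬ Realizable H S' ∧ S'.card ≤ s := by
  classical
  obtain ⟨S', hS'mem, hmin⟩ :=
    (S.powerset.filter (fun T => ¬ Realizable H T)).exists_min_image Finset.card
      ⟨S, by simp [hS]⟩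
  simp only [Finset.mem_filter, Finset.mem_powerset] at hS'mem
  obtain ⟨hsub, hunreal⟩ := hS'mem
  have herase : ∀ p ∈ S', Realizable H (S'.erase p) := by
    intro p hp
    by_contra hcon
    have hmem : S'.erase p ∈ (S.powerset.filter fun T => ¬ Realizable H T) := by
      simp only [Finset.mem_filter, Finset.mem_powerset]
      exact ⟨(Finset.erase_subset _ _).trans hsub, hcon⟩
    have h1 := hmin _ hmem
    have h2 := Finset.card_erase_lt_of_mem hp
    omega
  set ℓ := S'.card with hℓ
  let e := S'.equivFin
  let x : Fin ℓ → X := fun i => ((e.symm i) : X × Bool).1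
  let y : Fin ℓ → Bool := fun i => ((e.symm i) : X × Bool).2
  have key : IsHollowStarSet H x y := by
    constructor
    · rintro ⟨h, hH, hall⟩
      refine hunreal ⟨h, hH, fun p hp => ?_⟩
      have := hall (e ⟨p, hp⟩)
      simpa [x, y] using this
    · intro i
      obtain ⟨h, hH, hmatch⟩ := herase _ (e.symm i).2
      refine ⟨h, hH, ?_, ?_⟩
      · by_contra hne
        have hxi : h (x i) = y i := by
          cases hbv : h (x i) <;> cases hbv2 : y i <;> simp_all
        refine hunreal ⟨h, hH, fun p hp => ?_⟩
        by_cases hpq : p = (e.symm i : X × Bool)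
        · subst hpq; exact hxi
        · exact hmatch p (Finset.mem_erase.mpr ⟨hpq, hp⟩)
      · intro j hj
        have hne : (e.symm j : X × Bool) ≠ (e.symm i : X × Bool) := by
          intro h'
          exact hj (by simpa using e.symm.injective (Subtype.coe_injective h'))
        exact hmatch _ (Finset.mem_erase.mpr ⟨hne, (e.symm j).2⟩)
  exact ⟨S', hsub, hunreal, hs ℓ x y key⟩
end

section
/- Let H be a hypothesis class with hollow star number s∘, and let S be an unrealizable dataset. Then for every k ≥ 1, the number of k-critical subsets of S is at most s∘^k. -/
/-- A `k`-critical subset of an unrealizable dataset `S`: a `k`-element subset `Q ⊆ S`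
whose removal makes `S` realizable, while removing any proper subset of `Q` does not. -/
def IsKCritical {X : Type*} [DecidableEq X] (H : Set (X → Bool))
    (S Q : Finset (X × Bool)) (k : ℕ) : Prop :=
  Q ⊆ S ∧ Q.card = k ∧ Realizable H (S \ Q) ∧ ∀ Q' ⊂ Q, ¬ Realizable H (S \ Q')

theorem realizable_mono {X : Type*} (H : Set (X → Bool)) {S T : Finset (X × Bool)}
    (hsub : S ⊆ T) (h : Realizable H T) : Realizable H S := by
  obtain ⟨h, hH, hc⟩ := h
  exact ⟨h, hH, fun p hp => hc p (hsub hp)⟩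

theorem exists_minimal_unrealizable {X : Type*} [DecidableEq X] (H : Set (X → Bool))
    (S : Finset (X × Bool)) (hS : ¬ Realizable H S) :
    ∃ T, T ⊆ S ∧ ¬ Realizable H T ∧ ∀ T' ⊂ T, Realizable H T' := by
  classical
  induction S using Finset.strongInduction with
  | _ S ih =>
    by_cases h : ∀ T' ⊂ S, Realizable H T'
    · exact ⟨S, subset_rfl, hS, h⟩
    · push_neg at h
      obtain ⟨T', hsub, hT'⟩ := h
      obtain ⟨T, h1, h2, h3⟩ := ih T' hsub hT'
      exact ⟨T, h1.trans hsub.subset, h2, h3⟩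

theorem minimal_unrealizable_card_le {X : Type*} [DecidableEq X] (H : Set (X → Bool))
    (s : ℕ)
    (hs : ∀ (ℓ : ℕ) (x : Fin ℓ → X) (y : Fin ℓ → Bool), IsHollowStarSet H x y → ℓ ≤ s)
    (T : Finset (X × Bool)) (hT : ¬ Realizable H T)
    (hmin : ∀ T' ⊂ T, Realizable H T') : T.card ≤ s := by
  classical
  set e : Fin T.card → T := fun i => T.equivFin.symm i with he
  refine hs T.card (fun i => (e i : X × Bool).1) (fun i => (e i : X × Bool).2) ⟨?_, ?_⟩
  · rintro ⟨h, hH, hall⟩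
    refine hT ⟨h, hH, fun p hp => ?_⟩
    have := hall (T.equivFin ⟨p, hp⟩)
    simpa [he] using this
  · intro i
    have hpT : (e i : X × Bool) ∈ T := (e i).2
    have hss : T \ {(e i : X × Bool)} ⊂ T :=
      Finset.sdiff_ssubset (Finset.singleton_subset_iff.2 hpT) (Finset.singleton_nonempty _)
    obtain ⟨h, hH, hcorr⟩ := hmin _ hss
    refine ⟨h, hH, ?_, ?_⟩
    · by_contra hne
      have hcor : h (e i : X × Bool).1 = (e i : X × Bool).2 := by
        revert hne
        cases hb : h (e i : X × Bool).1 <;> cases hb2 : ((e i : X × Bool).2) <;> simp_all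
      refine hT ⟨h, hH, fun p hp => ?_⟩
      by_cases hpe : p = (e i : X × Bool)
      · subst hpe; exact hcor
      · exact hcorr p (Finset.mem_sdiff.2 ⟨hp, by simp [hpe]⟩)
    · intro j hj
      have hne : (e j : X × Bool) ≠ (e i : X × Bool) := by
        intro hEq
        exact hj (T.equivFin.symm.injective (Subtype.ext hEq))
      exact hcorr _ (Finset.mem_sdiff.2 ⟨(e j).2, by simp [hne]⟩)

open scoped Classical in
theorem kCritical_filter_card_le {X : Type*} [DecidableEq X] (H : Set (X → Bool))
    (s : ℕ)
    (hs : ∀ (ℓ : ℕ) (x : Fin ℓ → X) (y : Fin ℓ → Bool), IsHollowStarSet H x y → ℓ ≤ s)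
    (k : ℕ) : ∀ S : Finset (X × Bool),
      (S.powerset.filter fun Q => IsKCritical H S Q k).card ≤ s ^ k := by
  classical
  induction k with
  | zero =>
    intro S
    have hsub : (S.powerset.filter fun Q => IsKCritical H S Q 0) ⊆ {∅} := by
      intro Q hQ
      rw [Finset.mem_filter] at hQ
      have : Q = ∅ := Finset.card_eq_zero.1 hQ.2.2.1
      simp [this]
    calc (S.powerset.filter fun Q => IsKCritical H S Q 0).card
        ≤ ({∅} : Finset (Finset (X × Bool))).card := Finset.card_le_card hsub
      _ = 1 := Finset.card_singleton _
      _ ≤ s ^ 0 := by simp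
  | succ k ih =>
    intro S
    by_cases hS' : Realizable H S
    · have : (S.powerset.filter fun Q => IsKCritical H S Q (k+1)) = ∅ := by
        refine Finset.eq_empty_of_forall_notMem fun Q hQ => ?_
        rw [Finset.mem_filter] at hQ
        obtain ⟨-, hQS, hQcard, hQreal, hQmin⟩ := hQ
        have hne : Q.Nonempty := Finset.card_pos.1 (by omega)
        have : (∅ : Finset (X × Bool)) ⊂ Q := Finset.empty_ssubset.2 hne
        exact hQmin ∅ this (by simpa using hS')
      rw [this]; simp
    · obtain ⟨T, hTS, hTun, hTmin⟩ := exists_minimal_unrealizable H S hS'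
      have hTcard := minimal_unrealizable_card_le H s hs T hTun hTmin
      have hsub : (S.powerset.filter fun Q => IsKCritical H S Q (k+1)) ⊆
          T.biUnion fun p => ((S.erase p).powerset.filter
            fun Q' => IsKCritical H (S.erase p) Q' k).image (insert p) := by
        intro Q hQ
        rw [Finset.mem_filter] at hQ
        obtain ⟨-, hQS, hQcard, hQreal, hQmin⟩ := hQ
        have hint : ∃ p, p ∈ Q ∧ p ∈ T := by
          by_contra hc
          push_neg at hc
          have hsub2 : T ⊆ S \ Q :=
            fun p hp => Finset.mem_sdiff.2 ⟨hTS hp, fun hq => hc p hq hp⟩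
          exact hTun (realizable_mono H hsub2 hQreal)
        obtain ⟨p, hpQ, hpT⟩ := hint
        rw [Finset.mem_biUnion]
        refine ⟨p, hpT, ?_⟩
        rw [Finset.mem_image]
        refine ⟨Q.erase p, ?_, Finset.insert_erase hpQ⟩
        rw [Finset.mem_filter]
        have hsub' : Q.erase p ⊆ S.erase p := Finset.erase_subset_erase p hQS
        refine ⟨Finset.mem_powerset.2 hsub', hsub', ?_, ?_, ?_⟩
        · rw [Finset.card_erase_of_mem hpQ, hQcard]; omega
        · have heq : (S.erase p) \ (Q.erase p) = S \ Q := by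
            ext q
            simp only [Finset.mem_sdiff, Finset.mem_erase]
            constructor
            · rintro ⟨⟨hq1, hq2⟩, hq3⟩
              exact ⟨hq2, fun hqQ => hq3 ⟨hq1, hqQ⟩⟩
            · rintro ⟨hq1, hq2⟩
              exact ⟨⟨fun hqp => hq2 (hqp ▸ hpQ), hq1⟩, fun h => hq2 h.2⟩
          rw [heq]; exact hQreal
        · intro Q' hQ' hreal
          have hpQ' : p ∉ Q' := fun h => (Finset.notMem_erase p Q) (hQ'.subset h)
          have heq : (S.erase p) \ Q' = S \ (insert p Q') := by
            ext q
            simp only [Finset.mem_sdiff, Finset.mem_erase, Finset.mem_insert]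
            constructor
            · rintro ⟨⟨hq1, hq2⟩, hq3⟩
              exact ⟨hq2, fun h => h.elim hq1 hq3⟩
            · rintro ⟨hq1, hq2⟩
              exact ⟨⟨fun h => hq2 (Or.inl h), hq1⟩, fun h => hq2 (Or.inr h)⟩
          rw [heq] at hreal
          have hss : insert p Q' ⊆ Q := by
            have := Finset.insert_subset_insert p hQ'.subset
            rwa [Finset.insert_erase hpQ] at this
          have hcardlt : (insert p Q').card < Q.card := by
            have h1 := Finset.card_lt_card hQ'
            have h2 := Finset.card_erase_of_mem hpQ
            have h3 := Finset.card_insert_le p Q'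
            omega
          have hssub : insert p Q' ⊂ Q :=
            Finset.ssubset_iff_subset_ne.2 ⟨hss, fun h => by rw [h] at hcardlt; omega⟩
          exact hQmin _ hssub hreal
      calc (S.powerset.filter fun Q => IsKCritical H S Q (k+1)).card
          ≤ (T.biUnion fun p => ((S.erase p).powerset.filter
              fun Q' => IsKCritical H (S.erase p) Q' k).image (insert p)).card :=
            Finset.card_le_card hsub
        _ ≤ ∑ p ∈ T, (((S.erase p).powerset.filter
              fun Q' => IsKCritical H (S.erase p) Q' k).image (insert p)).card :=
            Finset.card_biUnion_le
        _ ≤ ∑ p ∈ T, s ^ k :=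
            Finset.sum_le_sum fun p _ => le_trans Finset.card_image_le (ih (S.erase p))
        _ = T.card * s ^ k := by rw [Finset.sum_const, smul_eq_mul]
        _ ≤ s * s ^ k := Nat.mul_le_mul_right _ hTcard
        _ = s ^ (k + 1) := (pow_succ' s k).symm

/-- If the hollow star number of `H` is at most `s`, then any unrealizable dataset `S`
has at most `s ^ k` many `k`-critical subsets, for every `k ≥ 1`. -/
theorem kCritical_count_le {X : Type*} [DecidableEq X] (H : Set (X → Bool))
    (s : ℕ)
    (hs : ∀ (ℓ : ℕ) (x : Fin ℓ → X) (y : Fin ℓ → Bool), IsHollowStarSet H x y → ℓ ≤ s)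
    (S : Finset (X × Bool)) (hS : ¬ Realizable H S) (k : ℕ) (hk : 1 ≤ k) :
    {Q : Finset (X × Bool) | IsKCritical H S Q k}.ncard ≤ s ^ k := by
  classical
  have heq : {Q : Finset (X × Bool) | IsKCritical H S Q k}
      = ↑(S.powerset.filter fun Q => IsKCritical H S Q k) := by
    ext Q
    simp only [Set.mem_setOf_eq, Finset.coe_filter, Finset.mem_powerset]
    exact ⟨fun h => ⟨h.1, h⟩, fun h => h.2⟩
  rw [heq, Set.ncard_coe_finset]
  exact kCritical_filter_card_le H s hs k S
end

section
/- For the class of linear separators (halfspaces) in R^d, the hollow star number is at most d + 2. -/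
/-- The class of linear separators (halfspaces) in `ℝ^d`:
`h x = 1` iff `⟨w, x⟩ ≥ b`. -/
def Halfspaces (d : ℕ) : Set ((Fin d → ℝ) → Bool) :=
  {h | ∃ (w : Fin d → ℝ) (b : ℝ), ∀ x, h x = decide (b ≤ ∑ i, w i * x i)}

/-- The lifted evaluation map: for a point `p : ℝ^d`, the linear functional on
`ℝ^{d+1}` sending `u` to `∑ j, p j * u j + u (last)`. -/
noncomputable def liftedEval (d : ℕ) (p : Fin d → ℝ) :
    (Fin (d + 1) → ℝ) →ₗ[ℝ] ℝ where
  toFun u := (∑ j : Fin d, p j * u j.castSucc) + u (Fin.last d)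
  map_add' u v := by
    simp [mul_add, Finset.sum_add_distrib]; ring
  map_smul' c u := by
    simp only [RingHom.id_apply, Pi.smul_apply, smul_eq_mul, Finset.mul_sum, mul_add]
    congr 1
    exact Finset.sum_congr rfl fun j _ => by ring

/-- The constraint set in `ℝ^{d+1}` corresponding to point `p` labeled `b`. -/
noncomputable def constraintSet (d : ℕ) (p : Fin d → ℝ) (b : Bool) :
    Set (Fin (d + 1) → ℝ) :=
  if b then (liftedEval d p) ⁻¹' Set.Ici 0 else (liftedEval d p) ⁻¹' Set.Iio 0

lemma constraintSet_convex (d : ℕ) (p : Fin d → ℝ) (b : Bool) :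
    Convex ℝ (constraintSet d p b) := by
  unfold constraintSet
  cases b <;> simp only [if_true, if_false, Bool.false_eq_true]
  · exact (convex_Iio (0:ℝ)).linear_preimage _
  · exact (convex_Ici (0:ℝ)).linear_preimage _

/-- A halfspace classifier correct on a point yields membership in the constraint set. -/
lemma mem_constraintSet_of_correct {d : ℕ} (w : Fin d → ℝ) (b : ℝ)
    (p : Fin d → ℝ) (c : Bool)
    (hc : decide (b ≤ ∑ i, w i * p i) = c) :
    (Fin.snoc w (-b) : Fin (d+1) → ℝ) ∈ constraintSet d p c := by
  have hval : liftedEval d p (Fin.snoc w (-b)) = (∑ i, w i * p i) - b := by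
    simp [liftedEval, Fin.snoc_castSucc, Fin.snoc_last, mul_comm]
    ring
  cases c with
  | true =>
    have : b ≤ ∑ i, w i * p i := by simpa using hc
    simp only [constraintSet, if_true]
    simp only [Set.mem_preimage, Set.mem_Ici, hval]
    linarith
  | false =>
    have : ¬ (b ≤ ∑ i, w i * p i) := by simpa using hc
    simp only [constraintSet, Bool.false_eq_true, if_false]
    simp only [Set.mem_preimage, Set.mem_Iio, hval]
    push_neg at this
    linarith

/-- Membership in all constraint sets yields a consistent halfspace classifier. -/
lemma exists_halfspace_of_mem {d ℓ : ℕ} (x : Fin ℓ → (Fin d → ℝ)) (y : Fin ℓ → Bool)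
    (u : Fin (d+1) → ℝ) (hu : ∀ i, u ∈ constraintSet d (x i) (y i)) :
    ∃ h ∈ Halfspaces d, ∀ i, h (x i) = y i := by
  refine ⟨fun z => decide (-(u (Fin.last d)) ≤ ∑ j, u j.castSucc * z j),
    ⟨fun j => u j.castSucc, -(u (Fin.last d)), fun _ => rfl⟩, fun i => ?_⟩
  have hu' := hu i
  have hval : liftedEval d (x i) u = (∑ j, u j.castSucc * (x i) j) + u (Fin.last d) := by
    simp [liftedEval, mul_comm]
  cases hy : y i with
  | true =>
    rw [hy] at hu'
    simp only [constraintSet, if_true, Set.mem_preimage, Set.mem_Ici, hval] at hu'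
    simp only [decide_eq_true_eq]
    linarith
  | false =>
    rw [hy] at hu'
    simp only [constraintSet, Bool.false_eq_true, if_false, Set.mem_preimage,
      Set.mem_Iio, hval] at hu'
    simp only [decide_eq_false_iff_not]
    intro hle
    linarith

/-- The hollow star number of linear separators in `ℝ^d` is at most `d + 2`. -/
theorem hollow_star_number_halfspaces_le (d ℓ : ℕ)
    (x : Fin ℓ → (Fin d → ℝ)) (y : Fin ℓ → Bool)
    (h : IsHollowStarSet (Halfspaces d) x y) :
    ℓ ≤ d + 2 := by
  classical
  by_contra hlt
  push_neg at hlt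
  obtain ⟨hunreal, hflip⟩ := h
  set C : Fin ℓ → Set (Fin (d+1) → ℝ) := fun i => constraintSet d (x i) (y i) with hC
  -- the full intersection is empty
  have hempty : ¬ (⋂ i ∈ (Finset.univ : Finset (Fin ℓ)), C i).Nonempty := by
    rintro ⟨u, hu⟩
    simp only [Set.mem_iInter] at hu
    exact hunreal (exists_halfspace_of_mem x y u fun i => hu i (Finset.mem_univ i))
  -- Helly: some subfamily of size ≤ d+2 has empty intersection
  have hfr : Module.finrank ℝ (Fin (d+1) → ℝ) = d + 1 := by
    simp
  have hhelly : ¬ ∀ I ⊆ (Finset.univ : Finset (Fin ℓ)),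
      I.card ≤ Module.finrank ℝ (Fin (d+1) → ℝ) + 1 → (⋂ i ∈ I, C i).Nonempty := by
    intro hall
    exact hempty (Convex.helly_theorem' (fun i _ => constraintSet_convex d (x i) (y i)) hall)
  push_neg at hhelly
  obtain ⟨I, -, hIcard, hIempty⟩ := hhelly
  rw [hfr] at hIcard
  -- pick an index outside I
  have hIne : I ≠ Finset.univ := by
    intro hIu
    rw [hIu, Finset.card_univ, Fintype.card_fin] at hIcard
    omega
  obtain ⟨i0, hi0⟩ : ∃ i0, i0 ∉ I := by
    by_contra hno
    push_neg at hno
    exact hIne (Finset.eq_univ_iff_forall.mpr hno)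
  -- flipping at i0 gives a halfspace correct on all j ≠ i0, hence on all of I
  obtain ⟨hi, ⟨w, b, hwb⟩, -, hrest⟩ := hflip i0
  have hmem : (Fin.snoc w (-b) : Fin (d+1) → ℝ) ∈ ⋂ i ∈ I, C i := by
    simp only [Set.mem_iInter]
    intro j hj
    have hne : j ≠ i0 := fun hji => hi0 (hji ▸ hj)
    have hcorrect : decide (b ≤ ∑ k, w k * x j k) = y j := by
      rw [← hwb (x j)]; exact hrest j hne
    exact mem_constraintSet_of_correct w b (x j) (y j) hcorrect
  rw [hIempty] at hmem
  exact hmem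
end

section
/- Let d ≥ k ≥ 1 and for each k-subset L ⊆ [d] let z_L = (1/(d−k)) Σ_{j∉L} e_j. Fix a k-subset L and consider the dataset D consisting of the positive points {(e_i, 1) : i ∉ L} and the negative points {(z_{L'}, 0) : L' a k-subset of [d], L' ≠ L}. Then D is linearly separable; in particular the halfspace with w = Σ_{i∉L} e_i and threshold b = 1 − 1/(2(d−k)) separates D. -/
/-- The centroid `z_L = (1/(d-k)) ∑_{j ∉ L} e_j` of the standard basis vectors
outside the `k`-subset `L` of `[d]`. -/
noncomputable def zL (d k : ℕ) (L : Finset (Fin d)) : Fin d → ℝ :=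
  fun j => if j ∈ L then 0 else 1 / ((d : ℝ) - (k : ℝ))

/-- The dataset with positive points `{(e_i, 1) : i ∉ L}` and negative points
`{(z_{L'}, 0) : L' ≠ L a k-subset}` is linearly separable; in particular it is
separated by `w = ∑_{i ∉ L} e_i` with threshold `b = 1 - 1/(2(d-k))`. -/
theorem centroid_family_separable (d k : ℕ) (hk : 1 ≤ k) (hkd : k ≤ d)
    (L : Finset (Fin d)) (hL : L.card = k) :
    (∀ i : Fin d, i ∉ L →
        (1 - 1 / (2 * ((d : ℝ) - (k : ℝ)))) ≤
          ∑ j, (if j ∈ L then (0 : ℝ) else 1) * (if j = i then (1 : ℝ) else 0)) ∧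
    (∀ L' : Finset (Fin d), L'.card = k → L' ≠ L →
        ∑ j, (if j ∈ L then (0 : ℝ) else 1) * zL d k L' j <
          1 - 1 / (2 * ((d : ℝ) - (k : ℝ)))) := by
  constructor
  · intro i hi
    have hsum : ∑ j, (if j ∈ L then (0:ℝ) else 1) * (if j = i then (1:ℝ) else 0) = 1 := by
      rw [Finset.sum_eq_single i]
      · simp [hi]
      · intro b _ hb; simp [hb]
      · simp
    rw [hsum]
    by_cases h : k < d
    · have hdk : (0:ℝ) < (d:ℝ) - k := by
        have : (k:ℝ) < d := by exact_mod_cast h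
        linarith
      have h1 : (0:ℝ) ≤ 1 / (2*((d:ℝ)-k)) := by positivity
      linarith
    · have hkd' : k = d := le_antisymm hkd (not_lt.mp h)
      have : L = Finset.univ := Finset.eq_univ_of_card L (by simp [hL, hkd'])
      exact absurd (this ▸ Finset.mem_univ i) hi
  · intro L' hL' hne
    have hlt : k < d := by
      by_contra h
      have hkd' : k = d := le_antisymm hkd (not_lt.mp h)
      have h1 : L = Finset.univ := Finset.eq_univ_of_card L (by simp [hL, hkd'])
      have h2 : L' = Finset.univ := Finset.eq_univ_of_card L' (by simp [hL', hkd'])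
      exact hne (h2.trans h1.symm)
    have hdk : (0:ℝ) < (d:ℝ) - k := by
      have : (k:ℝ) < d := by exact_mod_cast hlt
      linarith
    -- cardinality bound
    have hne' : ¬ L' ⊆ L := fun hsub =>
      hne (Finset.eq_of_subset_of_card_le hsub (by rw [hL, hL']))
    have hdiff : 1 ≤ (L' \ L).card := by
      rcases Finset.not_subset.mp hne' with ⟨x, hx, hxL⟩
      exact Finset.card_pos.mpr ⟨x, Finset.mem_sdiff.mpr ⟨hx, hxL⟩⟩
    have hsubset : Lᶜ ∩ L'ᶜ ⊆ Lᶜ \ (L' \ L) := by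
      intro x hx
      rw [Finset.mem_inter, Finset.mem_compl, Finset.mem_compl] at hx
      rw [Finset.mem_sdiff, Finset.mem_compl, Finset.mem_sdiff]
      exact ⟨hx.1, fun h => hx.2 h.1⟩
    have hsub2 : L' \ L ⊆ Lᶜ := fun x hx =>
      Finset.mem_compl.mpr (Finset.mem_sdiff.mp hx).2
    have hcard : (Lᶜ ∩ L'ᶜ).card ≤ (d - k) - 1 := by
      calc (Lᶜ ∩ L'ᶜ).card ≤ (Lᶜ \ (L' \ L)).card := Finset.card_le_card hsubset
        _ = Lᶜ.card - (L' \ L).card := Finset.card_sdiff_of_subset hsub2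
        _ ≤ (d - k) - 1 := by
            rw [Finset.card_compl, hL, Fintype.card_fin]
            omega
    have hcardR : ((Lᶜ ∩ L'ᶜ).card : ℝ) ≤ ((d:ℝ) - k) - 1 := by
      have : (((d - k) - 1 : ℕ) : ℝ) = ((d:ℝ) - k) - 1 := by
        rw [Nat.cast_sub (by omega : 1 ≤ d - k), Nat.cast_sub hkd, Nat.cast_one]
      calc ((Lᶜ ∩ L'ᶜ).card : ℝ) ≤ (((d - k) - 1 : ℕ) : ℝ) := by exact_mod_cast hcard
        _ = ((d:ℝ) - k) - 1 := this
    have hsum : ∑ j, (if j ∈ L then (0:ℝ) else 1) * zL d k L' j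
        = ((Lᶜ ∩ L'ᶜ).card : ℝ) * (1 / ((d:ℝ) - k)) := by
      have : ∀ j : Fin d, (if j ∈ L then (0:ℝ) else 1) * zL d k L' j
          = if j ∈ Lᶜ ∩ L'ᶜ then 1 / ((d:ℝ) - k) else 0 := by
        intro j
        by_cases h1 : j ∈ L <;> by_cases h2 : j ∈ L' <;>
          simp [zL, h1, h2]
      rw [Finset.sum_congr rfl (fun j _ => this j)]
      rw [Finset.sum_ite_mem, Finset.univ_inter, Finset.sum_const, nsmul_eq_mul]
    rw [hsum]
    set t : ℝ := (d:ℝ) - k with ht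
    have h2t : (0:ℝ) < 2 * t := by linarith
    have hinv : (0:ℝ) < 1 / t := one_div_pos.mpr hdk
    have hti : t * (1 / t) = 1 := mul_one_div_cancel (ne_of_gt hdk)
    have h1 : ((Lᶜ ∩ L'ᶜ).card : ℝ) * (1 / t) ≤ (t - 1) * (1 / t) :=
      mul_le_mul_of_nonneg_right hcardR (le_of_lt hinv)
    have h2 : (t - 1) * (1 / t) = 1 - 1 / t := by
      field_simp
    have h3 : 1 / (2 * t) < 1 / t := by
      apply one_div_lt_one_div_of_lt hdk
      linarith
    linarith
end

section
/- Let n ≥ 2. Define a domain X = {a_1,…,a_n} ∪ {b_1,…,b_{⌈log2 n⌉}} and a hypothesis class H = {h_1,…,h_n} where h_i(a_j) = 1 if j = i and 0 otherwise, and h_i(b_j) is the j-th bit of the binary representation of i. Then the minimum identification set of H has size exactly ⌈log2 n⌉, while the eluder dimension of H is at least n − 1. -/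
/-- The hypothesis `h_i` on the domain `{a_1,…,a_n} ⊕ {b_1,…,b_{⌈log₂ n⌉}}`:
`h_i(a_j) = 1` iff `j = i`, and `h_i(b_j)` is the `j`-th bit of `i`. -/
def hyp (n : ℕ) (i : Fin n) : (Fin n ⊕ Fin (Nat.clog 2 n)) → Bool
  | Sum.inl j => decide (j = i)
  | Sum.inr j => Nat.testBit i.val j.val

/-- A finite subset `T` of the domain is an identification set for the class
`{hyp n i : i}` if any two hypotheses agreeing on `T` are equal. -/
def IsIdSet (n : ℕ) (T : Finset (Fin n ⊕ Fin (Nat.clog 2 n))) : Prop :=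
  ∀ i i' : Fin n, (∀ x ∈ T, hyp n i x = hyp n i' x) → hyp n i = hyp n i'

/-- For the class `H = {h_1,…,h_n}` above, the minimum identification set has size
exactly `⌈log₂ n⌉`, while the eluder dimension of `H` is at least `n - 1`. -/
theorem idset_small_eluder_large (n : ℕ) (hn : 2 ≤ n) :
    (∃ T : Finset (Fin n ⊕ Fin (Nat.clog 2 n)),
        T.card = Nat.clog 2 n ∧ IsIdSet n T) ∧
    (∀ T : Finset (Fin n ⊕ Fin (Nat.clog 2 n)), IsIdSet n T → Nat.clog 2 n ≤ T.card) ∧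
    (∃ (x : Fin (n - 1) → (Fin n ⊕ Fin (Nat.clog 2 n))) (y : Fin (n - 1) → Bool),
        IsEluderSeq (Set.range (hyp n)) x y) := by
  have hpow : n ≤ 2 ^ Nat.clog 2 n := Nat.le_pow_clog one_lt_two n
  refine ⟨⟨Finset.univ.image Sum.inr, ?_, ?_⟩, ?_, ?_⟩
  · rw [Finset.card_image_of_injective _ Sum.inr_injective, Finset.card_univ,
      Fintype.card_fin]
  · intro i i' hag
    have hval : i.val = i'.val := by
      apply Nat.eq_of_testBit_eq
      intro j
      by_cases hj : j < Nat.clog 2 n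
      · have := hag (Sum.inr ⟨j, hj⟩) (Finset.mem_image_of_mem _ (Finset.mem_univ _))
        simpa [hyp] using this
      · push_neg at hj
        have h1 : i.val < 2 ^ j :=
          lt_of_lt_of_le (lt_of_lt_of_le i.isLt hpow) (Nat.pow_le_pow_right (by norm_num) hj)
        have h2 : i'.val < 2 ^ j :=
          lt_of_lt_of_le (lt_of_lt_of_le i'.isLt hpow) (Nat.pow_le_pow_right (by norm_num) hj)
        rw [Nat.testBit_eq_false_of_lt h1, Nat.testBit_eq_false_of_lt h2]
    rw [Fin.ext hval]
  · intro T hT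
    have hinj : Function.Injective
        (fun i : Fin n => (fun x : {x // x ∈ T} => hyp n i x.val)) := by
      intro i i' h
      have heq : hyp n i = hyp n i' := hT i i' (fun x hx => congrFun h ⟨x, hx⟩)
      have := congrFun heq (Sum.inl i)
      simp [hyp] at this
      exact this
    have hcard := Fintype.card_le_of_injective _ hinj
    simp only [Fintype.card_fin, Fintype.card_fun, Fintype.card_coe, Fintype.card_bool] at hcard
    calc Nat.clog 2 n ≤ Nat.clog 2 (2 ^ T.card) := Nat.clog_mono_right 2 hcard
      _ = T.card := Nat.clog_pow 2 T.card one_lt_two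
  · refine ⟨fun i => Sum.inl ⟨i.val, by omega⟩, fun _ => false, ?_⟩
    intro i
    have hi : i.val < n - 1 := i.isLt
    refine ⟨hyp n ⟨n - 1, by omega⟩, ⟨_, rfl⟩, hyp n ⟨i.val, by omega⟩, ⟨_, rfl⟩, ?_, ?_⟩
    · intro j hj
      have hji : j.val < i.val := hj
      have hjn : j.val < n - 1 := j.isLt
      constructor <;> · simp only [hyp, decide_eq_false_iff_not, Fin.ext_iff]; omega
    · simp only [hyp, ne_eq, Fin.ext_iff]
      intro h
      simp at h
      omega
end
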